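/- arXiv:2104.05826 — 2 statements merged into one kernel-verified Lean document; each statement's English description precedes it below -/
import Mathlib

section
/- Let (Xₙ)ₙ be a sequence of càdlàg processes on [0,∞) and define C̃ₙ(t) = (1/γₙ)·Cₙ(⌊αₙt⌋), where Cₙ(h) = Σ_{j=0}^h Zₙ(j), Zₙ(h+1) = Xₙ(Cₙ(h)), Cₙ(−1) = 0, αₙ → ∞, and 0 ≤ C̃ₙ(t) ≤ 1 for all t. Then for all 0 ≤ s < t, C̃ₙ(t) − C̃ₙ(s) ≤ (t − s + 2/αₙ)·‖X̃ₙ‖, where X̃ₙ(t) = (αₙ/γₙ)Xₙ(γₙt) and ‖f‖ = sup_{t∈[0,1]}|f(t)|. Consequently, the modulus w'_N(C̃ₙ; δ) ≤ 2(δ + 1/αₙ)·‖X̃ₙ‖ for all δ > 0 and integers N. -/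
open Set Filter Topology Bornology

/-!
Because `C̃` stays in `[0, 1]`, every `C h` lies in `[0, γ]`, so each increment
`Z (h + 1) = X (C h)` of the cumulative sum is at most `(γ / α) ‖X̃‖` in absolute value; the
supremum `‖X̃‖` is finite because a càdlàg function is bounded on compact sets. Fewer than
`α (t - s) + 1` increments separate `⌊α s⌋` from `⌊α t⌋`, which gives the increment bound.
Cutting `[0, N]` into `⌈N / 2δ⌉` pieces of equal length, a length in `(δ, 2δ]` (or all of
`[0, N]`), then bounds the oscillation of `C̃` on each piece by `(2δ + 2/α) ‖X̃‖`.
-/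

theorem isBounded_image_of_rightContinuous_of_leftLim {α β : Type*} [TopologicalSpace α]
    [LinearOrder α] [OrderTopology α] [PseudoMetricSpace β] {X : α → β}
    (hX_rc : ∀ t, ContinuousWithinAt X (Ici t) t)
    (hX_ll : ∀ t, ∃ l, Tendsto X (𝓝[<] t) (𝓝 l)) {s : Set α} (hs : IsCompact s) :
    IsBounded (X '' s) := by
  refine isBounded_image_of_isLocallyBounded_of_isCompact hs fun t => ?_
  obtain ⟨l, hl⟩ := hX_ll t
  obtain ⟨u, hu, hu_bdd⟩ := Metric.exists_isBounded_image_of_tendsto hl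
  obtain ⟨v, hv, hv_bdd⟩ := Metric.exists_isBounded_image_of_tendsto (hX_rc t).tendsto
  refine ⟨u ∪ v, ?_, by simpa only [image_union] using hu_bdd.union hv_bdd⟩
  rw [← nhdsLT_sup_nhdsGE]
  exact union_mem_sup hu hv

theorem bddAbove_abs_mul_comp_mul {X : ℝ → ℝ} (a : ℝ) {γ : ℝ} (hγ : 0 ≤ γ)
    (hX : IsBounded (X '' Icc 0 γ)) : BddAbove ((fun t => |a * X (γ * t)|) '' Icc 0 1) := by
  obtain ⟨K, hK⟩ := isBounded_iff_forall_norm_le.1 hX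
  refine ⟨|a| * K, forall_mem_image.2 fun r hr => ?_⟩
  rw [abs_mul]
  gcongr
  exact hK _ (mem_image_of_mem _ ⟨mul_nonneg hγ hr.1, mul_le_of_le_one_right hγ hr.2⟩)

theorem Nat.cast_floor_sub_cast_floor_lt {R : Type*} [Field R] [LinearOrder R]
    [IsStrictOrderedRing R] [FloorSemiring R] {a b : R} (ha : 0 ≤ a) (hab : a ≤ b) :
    (⌊b⌋₊ : R) - ⌊a⌋₊ < b - a + 1 := by
  linarith [Nat.floor_le (ha.trans hab), Nat.lt_floor_add_one a]

theorem dist_le_mul_of_dist_succ_le {E : Type*} [PseudoMetricSpace E] {f : ℕ → E} {B : ℝ}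
    (hf : ∀ n, dist (f n) (f (n + 1)) ≤ B) {m n : ℕ} (hmn : m ≤ n) :
    dist (f m) (f n) ≤ ((n : ℝ) - m) * B := by
  have := dist_le_Ico_sum_of_dist_le (f := f) (d := fun _ => B) hmn fun _ _ => hf _
  rwa [Finset.sum_const, Nat.card_Ico, nsmul_eq_mul, Nat.cast_sub hmn] at this

theorem dist_floor_mul_le {E : Type*} [PseudoMetricSpace E] {f : ℕ → E} {M α : ℝ}
    (hα : 0 < α) (hf : ∀ n, dist (f n) (f (n + 1)) ≤ M / α) {s t : ℝ} (hs : 0 ≤ s) (ht : 0 ≤ t) :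
    dist (f ⌊α * s⌋₊) (f ⌊α * t⌋₊) ≤ (|t - s| + 1 / α) * M := by
  wlog hst : s ≤ t generalizing s t
  · rw [dist_comm, abs_sub_comm]
    exact this ht hs (le_of_not_ge hst)
  have hM : 0 ≤ M / α := dist_nonneg.trans (hf 0)
  have has : 0 ≤ α * s := mul_nonneg hα.le hs
  have hαst : α * s ≤ α * t := mul_le_mul_of_nonneg_left hst hα.le
  calc dist (f ⌊α * s⌋₊) (f ⌊α * t⌋₊) ≤ ((⌊α * t⌋₊ : ℝ) - ⌊α * s⌋₊) * (M / α) :=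
        dist_le_mul_of_dist_succ_le hf (Nat.floor_le_floor hαst)
    _ ≤ (α * |t - s| + 1) * (M / α) := by
        gcongr
        rw [abs_of_nonneg (sub_nonneg.2 hst), mul_sub]
        exact (Nat.cast_floor_sub_cast_floor_lt has hαst).le
    _ = (|t - s| + 1 / α) * M := by field_simp

theorem exists_nat_div_le_two_mul {δ N : ℝ} (hδ : 0 < δ) (hN : 0 < N) :
    ∃ v : ℕ, 0 < v ∧ N / v ≤ 2 * δ ∧ (1 < v → δ < N / v) := by
  set v := ⌈N / (2 * δ)⌉₊
  have hv : 0 < v := Nat.ceil_pos.2 (by positivity)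
  have hv' : (0 : ℝ) < v := Nat.cast_pos.2 hv
  refine ⟨v, hv, ?_, fun hv1 => ?_⟩
  · rw [div_le_iff₀ hv', mul_comm, ← div_le_iff₀ (by positivity)]
    exact Nat.le_ceil _
  · have hlt : (v : ℝ) < N / (2 * δ) + 1 := Nat.ceil_lt_add_one (by positivity)
    have hv2 : (2 : ℝ) ≤ v := by exact_mod_cast hv1
    rw [lt_div_iff₀ hv']
    rw [div_add_one (by positivity), lt_div_iff₀ (by positivity)] at hlt
    nlinarith

theorem exists_partition_abs_sub_le {f : ℝ → ℝ} {c M δ N : ℝ} (hM : 0 ≤ M)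
    (hf : ∀ s t, 0 ≤ s → 0 ≤ t → |f t - f s| ≤ (|t - s| + c) * M) (hδ : 0 < δ) (hN : 0 < N) :
    ∃ (v : ℕ) (ts : ℕ → ℝ), 0 < v ∧ ts 0 = 0 ∧ ts v = N ∧
      (∀ i, i + 1 ≤ v → ts i < ts (i + 1)) ∧
      (∀ i, i + 1 < v → δ < ts (i + 1) - ts i) ∧
      (∀ i, i + 1 ≤ v → ∀ s ∈ Ico (ts i) (ts (i + 1)), ∀ u ∈ Ico (ts i) (ts (i + 1)),
        |f u - f s| ≤ (2 * δ + c) * M) := by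
  obtain ⟨v, hv, hmesh, hgap⟩ := exists_nat_div_le_two_mul hδ hN
  have hstep (i : ℕ) : ((i + 1 : ℕ) : ℝ) * (N / v) - i * (N / v) = N / v := by
    push_cast; ring
  refine ⟨v, fun i => i * (N / v), hv, by simp, by field_simp, fun i _ => ?_,
    fun i hi => ?_, fun i _ s hs u hu => ?_⟩
  · linarith [hstep i, (by positivity : 0 < N / v)]
  · rw [hstep]; exact hgap (by omega)
  · have hs0 : 0 ≤ s := (by positivity : (0 : ℝ) ≤ i * (N / v)).trans hs.1
    have hu0 : 0 ≤ u := (by positivity : (0 : ℝ) ≤ i * (N / v)).trans hu.1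
    have hus : |u - s| ≤ 2 * δ := by
      refine (abs_sub_lt_iff.2 ⟨?_, ?_⟩).le.trans hmesh <;>
        linarith [hs.1, hs.2, hu.1, hu.2, hstep i]
    exact (hf s u hs0 hu0).trans (by gcongr)

theorem stmt14_general
    (X : ℝ → ℝ)
    (hX_rc : ∀ t, ContinuousWithinAt X (Ici t) t)
    (hX_ll : ∀ t, ∃ l, Tendsto X (nhdsWithin t (Iio t)) (nhds l))
    (Z C : ℕ → ℝ) (αn γn : ℝ) (hα : 0 < αn) (hγ : 0 < γn)
    (hC : ∀ h : ℕ, C h = ∑ j ∈ Finset.range (h + 1), Z j)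
    (hZ : ∀ h : ℕ, Z (h + 1) = X (C h))
    (hbound : ∀ t : ℝ, 0 ≤ t →
      0 ≤ (1 / γn) * C (⌊αn * t⌋₊) ∧ (1 / γn) * C (⌊αn * t⌋₊) ≤ 1)
    (M : ℝ) (hM : M = sSup ((fun t => |(αn / γn) * X (γn * t)|) '' Icc 0 1)) :
    (∀ s t : ℝ, 0 ≤ s → s < t →
      (1 / γn) * C (⌊αn * t⌋₊) - (1 / γn) * C (⌊αn * s⌋₊) ≤ (t - s + 2 / αn) * M) ∧
    (∀ δ : ℝ, 0 < δ → ∀ N : ℕ, 0 < N →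
      ∃ (v : ℕ) (ts : ℕ → ℝ), 0 < v ∧ ts 0 = 0 ∧ ts v = N ∧
        (∀ i, i + 1 ≤ v → ts i < ts (i + 1)) ∧
        (∀ i, i + 1 < v → δ < ts (i + 1) - ts i) ∧
        (∀ i, i + 1 ≤ v → ∀ s ∈ Ico (ts i) (ts (i + 1)), ∀ u ∈ Ico (ts i) (ts (i + 1)),
          |(1 / γn) * C (⌊αn * u⌋₊) - (1 / γn) * C (⌊αn * s⌋₊)| ≤
            2 * (δ + 1 / αn) * M)) := by
  have hbdd := bddAbove_abs_mul_comp_mul (αn / γn) hγ.le <|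
    isBounded_image_of_rightContinuous_of_leftLim hX_rc hX_ll isCompact_Icc
  have hX_le (r : ℝ) (hr : r ∈ Icc 0 1) : |(αn / γn) * X (γn * r)| ≤ M :=
    hM ▸ le_csSup hbdd (mem_image_of_mem _ hr)
  have hM0 : 0 ≤ M := (abs_nonneg _).trans (hX_le 0 (left_mem_Icc.2 zero_le_one))
  have hC_mem (n : ℕ) : C n / γn ∈ Icc 0 1 := by
    simpa [hα.ne', div_eq_inv_mul] using hbound (n / αn) (by positivity)
  have hstep (n : ℕ) : dist (1 / γn * C n) (1 / γn * C (n + 1)) ≤ M / αn := by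
    have := hX_le _ (hC_mem n)
    rw [mul_div_cancel₀ _ hγ.ne', abs_mul, abs_of_pos (div_pos hα hγ)] at this
    rw [Real.dist_eq, ← mul_sub, abs_mul, abs_sub_comm, hC, hC, Finset.sum_range_succ _ (n + 1),
      add_sub_cancel_left, hZ, abs_of_pos (one_div_pos.2 hγ), le_div_iff₀ hα]
    linarith [show 1 / γn * |X (C n)| * αn = αn / γn * |X (C n)| by ring]
  have hincr (s t : ℝ) (hs : 0 ≤ s) (ht : 0 ≤ t) :
      |1 / γn * C ⌊αn * t⌋₊ - 1 / γn * C ⌊αn * s⌋₊| ≤ (|t - s| + 2 / αn) * M := by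
    rw [← Real.dist_eq, dist_comm]
    refine (dist_floor_mul_le hα hstep hs ht).trans ?_
    gcongr
    norm_num
  refine ⟨fun s t hs hst => ?_, fun δ hδ N hN => ?_⟩
  · have := hincr s t hs (hs.trans hst.le)
    rw [abs_of_pos (sub_pos.2 hst)] at this
    exact (le_abs_self _).trans this
  · rw [show 2 * (δ + 1 / αn) = 2 * δ + 2 / αn by ring]
    exact exists_partition_abs_sub_le hM0 hincr hδ (Nat.cast_pos.2 hN)

/-- The deterministic increment bound in the tightness proof: if `Z` solves the discrete
Lamperti equation driven by a càdlàg `X` and the rescaled cumulative profile `C̃` stays in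
`[0,1]`, then `C̃(t) - C̃(s) ≤ (t - s + 2/α)‖X̃‖`, and consequently the Skorokhod modulus
`w'_N(C̃; δ)` is bounded by `2(δ + 1/α)‖X̃‖` (witnessed by a partition with mesh `> δ`). -/
theorem stmt14
    (X : ℝ → ℝ)
    (hX_rc : ∀ t, ContinuousWithinAt X (Ici t) t)
    (hX_ll : ∀ t, ∃ l, Tendsto X (nhdsWithin t (Iio t)) (nhds l))
    (Z C : ℕ → ℝ) (αn γn : ℝ) (hα : 0 < αn) (hγ : 0 < γn)
    (hC : ∀ h : ℕ, C h = ∑ j ∈ Finset.range (h + 1), Z j)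
    (hZ : ∀ h : ℕ, Z (h + 1) = X (C h))
    (hZ0 : Z 0 = X 0)
    (hbound : ∀ t : ℝ, 0 ≤ t →
      0 ≤ (1 / γn) * C (⌊αn * t⌋₊) ∧ (1 / γn) * C (⌊αn * t⌋₊) ≤ 1)
    (M : ℝ) (hM : M = sSup ((fun t => |(αn / γn) * X (γn * t)|) '' Icc 0 1)) :
    (∀ s t : ℝ, 0 ≤ s → s < t →
      (1 / γn) * C (⌊αn * t⌋₊) - (1 / γn) * C (⌊αn * s⌋₊) ≤ (t - s + 2 / αn) * M) ∧
    (∀ δ : ℝ, 0 < δ → ∀ N : ℕ, 0 < N →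
      ∃ (v : ℕ) (ts : ℕ → ℝ), 0 < v ∧ ts 0 = 0 ∧ ts v = N ∧
        (∀ i, i + 1 ≤ v → ts i < ts (i + 1)) ∧
        (∀ i, i + 1 < v → δ < ts (i + 1) - ts i) ∧
        (∀ i, i + 1 ≤ v → ∀ s ∈ Ico (ts i) (ts (i + 1)), ∀ u ∈ Ico (ts i) (ts (i + 1)),
          |(1 / γn) * C (⌊αn * u⌋₊) - (1 / γn) * C (⌊αn * s⌋₊)| ≤
            2 * (δ + 1 / αn) * M)) :=
  stmt14_general X hX_rc hX_ll Z C αn γn hα hγ hC hZ hbound M hM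
end

section
/- Suppose (hₙ) is a sequence of continuous excursions hₙ : [0,xₙ] → [0,∞) and x,h with hₙ → h uniformly (after reparametrization to [0,1]) and xₙ → x; let T_{hₙ}, T_h denote the associated rooted real trees with mass measures μₙ, μ. If t > 0 satisfies Leb{s ∈ [0,x] : h(s) = t} = 0, then μₙ(B(ρₙ,t)) = Leb{s ∈ [0,xₙ] : hₙ(s) ≤ t} → Leb{s ∈ [0,x] : h(s) ≤ t} = μ(B(ρ,t)). -/
open MeasureTheory Set Filter Topology
open scoped ENNReal

/-!
Since `dist ρ (q s) = h s`, the preimage of the closed ball `B(ρ, t)` under `q` is the sublevel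
set `{h ≤ t}`, so both ball masses are occupation masses. After rescaling `[0, xₙ]` to `[0, 1]`,
the sublevel set `{hₙ ≤ t}` is squeezed between `{h ≤ t - εₙ}` and `{h ≤ t + εₙ}`, where `εₙ` is
the uniform distance; the map `r ↦ Leb {h ≤ r}` is continuous at `t` because `{h = t}` is null.
-/

theorem volume_sep_Icc_zero_eq_ofReal_mul {c : ℝ} (hc : 0 < c) (P : ℝ → Prop) :
    volume {s ∈ Icc 0 c | P s} = ENNReal.ofReal c * volume {u ∈ Icc (0 : ℝ) 1 | P (c * u)} := by
  have hpre : {u ∈ Icc (0 : ℝ) 1 | P (c * u)} = (c * ·) ⁻¹' {s ∈ Icc 0 c | P s} := by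
    have hIcc : (c * ·) ⁻¹' Icc 0 c = Icc 0 1 := by
      rw [preimage_const_mul_Icc₀ _ _ hc, zero_div, div_self hc.ne']
    rw [← hIcc]
    rfl
  rw [hpre, Real.volume_preimage_mul_left hc.ne', abs_inv, abs_of_pos hc, ← mul_assoc,
    ← ENNReal.ofReal_mul hc.le, mul_inv_cancel₀ hc.ne', ENNReal.ofReal_one, one_mul]

theorem ContinuousOn.comp_mul_Icc_zero_one {E : Type*} [TopologicalSpace E] {f : ℝ → E}
    {c : ℝ} (hc : 0 ≤ c) (hf : ContinuousOn f (Icc 0 c)) :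
    ContinuousOn (fun u => f (c * u)) (Icc 0 1) :=
  hf.comp (continuous_const_mul c).continuousOn
    fun _ hu => ⟨mul_nonneg hc hu.1, mul_le_of_le_one_right hc hu.2⟩

theorem map_restrict_closedBall_eq_sep_le {α T : Type*} [MeasurableSpace α] [MetricSpace T]
    [MeasurableSpace T] [OpensMeasurableSpace T] {ν : Measure α} {A : Set α} {q : α → T}
    (hq : Measurable q) {ρ : T} {f : α → ℝ} (hd : ∀ s ∈ A, dist ρ (q s) = f s) (t : ℝ) :
    (ν.restrict A).map q (Metric.closedBall ρ t) = ν {s ∈ A | f s ≤ t} := by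
  rw [Measure.map_apply hq Metric.isClosed_closedBall.measurableSet,
    Measure.restrict_apply (hq Metric.isClosed_closedBall.measurableSet)]
  congr 1
  ext s
  simp only [mem_inter_iff, mem_preimage, Metric.mem_closedBall, mem_sep_iff, dist_comm (q s)]
  exact ⟨fun ⟨hb, hs⟩ => ⟨hs, hd s hs ▸ hb⟩, fun ⟨hs, hf⟩ => ⟨(hd s hs).symm ▸ hf, hs⟩⟩

theorem tendstoUniformlyOn_of_tendsto_iSup_dist {ι β E : Type*} [PseudoMetricSpace E]
    {l : Filter ι} {g : ι → β → E} {G : β → E} {S : Set β}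
    (hbdd : ∀ i, BddAbove (range fun u : S => dist (g i u) (G u)))
    (hsup : Tendsto (fun i => ⨆ u : S, dist (g i u) (G u)) l (𝓝 0)) :
    TendstoUniformlyOn g G l S := by
  refine Metric.tendstoUniformlyOn_iff.2 fun ε hε => ?_
  filter_upwards [hsup.eventually_lt_const hε] with i hi u hu
  rw [dist_comm]
  exact (le_ciSup (hbdd i) ⟨u, hu⟩).trans_lt hi

section LevelSets

variable {α : Type*} [MeasurableSpace α] {μ : Measure α} {S : Set α} {G : α → ℝ} {t : ℝ}

theorem exists_lt_of_lt_measure_sep_le {a : ℝ≥0∞} (hnull : μ {u ∈ S | G u = t} = 0)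
    (ha : a < μ {u ∈ S | G u ≤ t}) : ∃ r < t, a < μ {u ∈ S | G u ≤ r} := by
  obtain ⟨v, hv_mono, hv_lt, hv_lim⟩ := exists_seq_strictMono_tendsto t
  have hunion : (⋃ n, {u ∈ S | G u ≤ v n}) = {u ∈ S | G u < t} := by
    ext u
    simp only [mem_iUnion, mem_sep_iff]
    refine ⟨fun ⟨n, hu, hGu⟩ => ⟨hu, hGu.trans_lt (hv_lt n)⟩, fun ⟨hu, hGu⟩ => ?_⟩
    obtain ⟨n, hn⟩ := (hv_lim.eventually_const_lt hGu).exists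
    exact ⟨n, hu, hn.le⟩
  have hlt : a < μ {u ∈ S | G u < t} := by
    refine ha.trans_le ?_
    calc μ {u ∈ S | G u ≤ t} ≤ μ ({u ∈ S | G u < t} ∪ {u ∈ S | G u = t}) :=
          measure_mono fun u ⟨hu, hGu⟩ => hGu.lt_or_eq.imp (⟨hu, ·⟩) (⟨hu, ·⟩)
      _ ≤ μ {u ∈ S | G u < t} := (measure_union_le _ _).trans_eq (by rw [hnull, add_zero])
  have hmono : Monotone fun n => {u ∈ S | G u ≤ v n} :=
    fun m n hmn u ⟨hu, hGu⟩ => ⟨hu, hGu.trans (hv_mono.monotone hmn)⟩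
  rw [← hunion] at hlt
  obtain ⟨n, hn⟩ := ((tendsto_measure_iUnion_atTop hmono).eventually_const_lt hlt).exists
  exact ⟨v n, hv_lt n, hn⟩

theorem exists_gt_of_measure_sep_le_lt {b : ℝ≥0∞} (hS : μ S ≠ ∞)
    (hG : ∀ r, NullMeasurableSet {u ∈ S | G u ≤ r} μ) (hb : μ {u ∈ S | G u ≤ t} < b) :
    ∃ r > t, μ {u ∈ S | G u ≤ r} < b := by
  have hinter : (⋂ r > t, {u ∈ S | G u ≤ r}) = {u ∈ S | G u ≤ t} := by
    ext u
    simp only [mem_iInter, mem_sep_iff]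
    refine ⟨fun h => ⟨(h (t + 1) (by linarith)).1, le_of_forall_gt_imp_ge_of_dense fun r hr => (h r hr).2⟩,
      fun ⟨hu, hGu⟩ r hr => ⟨hu, hGu.trans hr.le⟩⟩
  have hlim := tendsto_measure_biInter_gt (μ := μ) (a := t) (fun r _ => hG r)
    (fun _ _ _ hrs u ⟨hu, hGu⟩ => ⟨hu, hGu.trans hrs⟩)
    ⟨t + 1, by linarith, measure_ne_top_of_subset (sep_subset _ _) hS⟩
  rw [hinter] at hlim
  exact ((hlim.eventually_lt_const hb).and self_mem_nhdsWithin).exists.imp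
    fun r ⟨hr, hrt⟩ => ⟨hrt, hr⟩

theorem tendsto_measure_sep_le_of_tendstoUniformlyOn {ι : Type*} {l : Filter ι} {g : ι → α → ℝ}
    (hS : μ S ≠ ∞) (hG : ∀ r, NullMeasurableSet {u ∈ S | G u ≤ r} μ)
    (hnull : μ {u ∈ S | G u = t} = 0) (hg : TendstoUniformlyOn g G l S) :
    Tendsto (fun i => μ {u ∈ S | g i u ≤ t}) l (𝓝 (μ {u ∈ S | G u ≤ t})) := by
  refine tendsto_order.2 ⟨fun a ha => ?_, fun b hb => ?_⟩
  · obtain ⟨r, hrt, har⟩ := exists_lt_of_lt_measure_sep_le hnull ha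
    filter_upwards [Metric.tendstoUniformlyOn_iff.1 hg _ (sub_pos.2 hrt)] with i hi
    have hsub : {u ∈ S | G u ≤ r} ⊆ {u ∈ S | g i u ≤ t} := fun u ⟨hu, hGu⟩ =>
      ⟨hu, by linarith [(abs_lt.1 ((Real.dist_eq _ _).symm ▸ hi u hu)).1]⟩
    exact har.trans_le (measure_mono hsub)
  · obtain ⟨r, hrt, hrb⟩ := exists_gt_of_measure_sep_le_lt hS hG hb
    filter_upwards [Metric.tendstoUniformlyOn_iff.1 hg _ (sub_pos.2 hrt)] with i hi
    have hsub : {u ∈ S | g i u ≤ t} ⊆ {u ∈ S | G u ≤ r} := fun u ⟨hu, hgu⟩ =>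
      ⟨hu, by linarith [(abs_lt.1 ((Real.dist_eq _ _).symm ▸ hi u hu)).2]⟩
    exact (measure_mono hsub).trans_lt hrb

end LevelSets

theorem stmt19_general
    (x : ℝ) (hx : 0 < x) (xn : ℕ → ℝ) (hxn : ∀ n, 0 < xn n)
    (h : ℝ → ℝ) (hn : ℕ → ℝ → ℝ)
    (hcont : ContinuousOn h (Icc 0 x))
    (hncont : ∀ n, ContinuousOn (hn n) (Icc 0 (xn n)))
    (hxconv : Tendsto xn atTop (nhds x))
    (hunif : Tendsto (fun n => ⨆ u : Icc (0:ℝ) 1, |hn n (xn n * u) - h (x * u)|)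
      atTop (nhds 0))
    -- the coded real trees, presented via their quotient maps and pushforward measures
    (Tn : ℕ → Type*) [∀ n, MetricSpace (Tn n)] [∀ n, MeasurableSpace (Tn n)]
    [∀ n, BorelSpace (Tn n)]
    (qn : ∀ n, ℝ → Tn n) (hqn : ∀ n, Measurable (qn n))
    (ρn : ∀ n, Tn n)
    (hdn : ∀ n, ∀ s ∈ Icc 0 (xn n), dist (ρn n) (qn n s) = hn n s)
    (μn : ∀ n, Measure (Tn n))
    (hμn : ∀ n, μn n = Measure.map (qn n) (volume.restrict (Icc 0 (xn n))))
    (T : Type*) [MetricSpace T] [MeasurableSpace T] [BorelSpace T]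
    (q : ℝ → T) (hq : Measurable q)
    (ρ : T)
    (hd : ∀ s ∈ Icc 0 x, dist ρ (q s) = h s)
    (μ : Measure T)
    (hμ : μ = Measure.map q (volume.restrict (Icc 0 x)))
    (t : ℝ)
    (hlevel : volume {s ∈ Icc 0 x | h s = t} = 0) :
    (∀ n, μn n (Metric.closedBall (ρn n) t) = volume {s ∈ Icc 0 (xn n) | hn n s ≤ t}) ∧
    μ (Metric.closedBall ρ t) = volume {s ∈ Icc 0 x | h s ≤ t} ∧
    Tendsto (fun n => μn n (Metric.closedBall (ρn n) t)) atTop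
      (nhds (μ (Metric.closedBall ρ t))) := by
  have hballn n := hμn n ▸ map_restrict_closedBall_eq_sep_le (hqn n) (hdn n) t
  have hball := hμ ▸ map_restrict_closedBall_eq_sep_le hq hd t
  refine ⟨hballn, hball, ?_⟩
  simp only [hballn, hball, volume_sep_Icc_zero_eq_ofReal_mul hx,
    volume_sep_Icc_zero_eq_ofReal_mul (hxn _)]
  have hG := hcont.comp_mul_Icc_zero_one hx.le
  have hg n := (hncont n).comp_mul_Icc_zero_one (hxn n).le
  have hbdd n : BddAbove (range fun u : Icc (0 : ℝ) 1 => dist (hn n (xn n * u)) (h (x * u))) := by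
    refine (isCompact_Icc.bddAbove_image
      (continuous_dist.comp_continuousOn ((hg n).prodMk hG))).mono ?_
    exact range_subset_iff.2 fun u => mem_image_of_mem _ u.2
  have hnull : volume {u ∈ Icc (0 : ℝ) 1 | h (x * u) = t} = 0 := by
    rw [volume_sep_Icc_zero_eq_ofReal_mul hx] at hlevel
    exact (mul_eq_zero.1 hlevel).resolve_left (ENNReal.ofReal_pos.2 hx).ne'
  have hunif' : TendstoUniformlyOn (fun n u => hn n (xn n * u)) (fun u => h (x * u)) atTop
      (Icc 0 1) :=
    tendstoUniformlyOn_of_tendsto_iSup_dist hbdd (by simpa only [Real.dist_eq] using hunif)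
  have hlim := tendsto_measure_sep_le_of_tendstoUniformlyOn measure_Icc_lt_top.ne
    (fun r => (hG.preimage_isClosed_of_isClosed isClosed_Icc isClosed_Iic).nullMeasurableSet)
    hnull hunif'
  exact ENNReal.Tendsto.mul (ENNReal.tendsto_ofReal hxconv)
    (Or.inl (ENNReal.ofReal_pos.2 hx).ne') hlim (Or.inr ENNReal.ofReal_ne_top)

/-- If excursions `hₙ` converge to `h` uniformly after reparametrization to `[0,1]` (with
lengths `xₙ → x`), and the level set `{h = t}` is Lebesgue-null, then the ball masses of
the coded real trees converge: `μₙ(B(ρₙ,t)) = Leb{hₙ ≤ t} → Leb{h ≤ t} = μ(B(ρ,t))`. -/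
theorem stmt19
    (x : ℝ) (hx : 0 < x) (xn : ℕ → ℝ) (hxn : ∀ n, 0 < xn n)
    (h : ℝ → ℝ) (hn : ℕ → ℝ → ℝ)
    (hcont : ContinuousOn h (Icc 0 x)) (h0 : h 0 = 0) (hxx : h x = 0)
    (hpos : ∀ t ∈ Ioo 0 x, 0 < h t)
    (hncont : ∀ n, ContinuousOn (hn n) (Icc 0 (xn n)))
    (hn0 : ∀ n, hn n 0 = 0) (hnx : ∀ n, hn n (xn n) = 0)
    (hnpos : ∀ n, ∀ t ∈ Ioo 0 (xn n), 0 < hn n t)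
    (hxconv : Tendsto xn atTop (nhds x))
    (hunif : Tendsto (fun n => ⨆ u : Icc (0:ℝ) 1, |hn n (xn n * u) - h (x * u)|)
      atTop (nhds 0))
    -- the coded real trees, presented via their quotient maps and pushforward measures
    (Tn : ℕ → Type*) [∀ n, MetricSpace (Tn n)] [∀ n, MeasurableSpace (Tn n)]
    [∀ n, BorelSpace (Tn n)]
    (qn : ∀ n, ℝ → Tn n) (hqn : ∀ n, Measurable (qn n))
    (ρn : ∀ n, Tn n) (hρn : ∀ n, ρn n = qn n 0)
    (hdn : ∀ n, ∀ s ∈ Icc 0 (xn n), dist (ρn n) (qn n s) = hn n s)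
    (μn : ∀ n, Measure (Tn n))
    (hμn : ∀ n, μn n = Measure.map (qn n) (volume.restrict (Icc 0 (xn n))))
    (T : Type*) [MetricSpace T] [MeasurableSpace T] [BorelSpace T]
    (q : ℝ → T) (hq : Measurable q)
    (ρ : T) (hρ : ρ = q 0)
    (hd : ∀ s ∈ Icc 0 x, dist ρ (q s) = h s)
    (μ : Measure T)
    (hμ : μ = Measure.map q (volume.restrict (Icc 0 x)))
    (t : ℝ) (ht : 0 < t)
    (hlevel : volume {s ∈ Icc 0 x | h s = t} = 0) :
    (∀ n, μn n (Metric.closedBall (ρn n) t) = volume {s ∈ Icc 0 (xn n) | hn n s ≤ t}) ∧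
    μ (Metric.closedBall ρ t) = volume {s ∈ Icc 0 x | h s ≤ t} ∧
    Tendsto (fun n => μn n (Metric.closedBall (ρn n) t)) atTop
      (nhds (μ (Metric.closedBall ρ t))) :=
  stmt19_general x hx xn hxn h hn hcont hncont hxconv hunif Tn qn hqn ρn hdn μn hμn T q hq ρ hd μ hμ
    t hlevel
end
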